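/- arXiv:1406.1522 — 5 statements merged into one kernel-verified Lean document; each statement's English description precedes it below -/
import Mathlib

section
/- For Laurent series in the shift operator with the multiplication rule aT^i · bT^j = a·T^i(b)·T^{i+j}, the residue (the coefficient of T^0) of any commutator [A,B] of two such series lies in the image of the operator T−1. Concretely, for monomials, [aT^j, bT^{-j}] = (T^j − 1)(T^{-j}(a)·b), and T^j − 1 factors through T − 1. -/
/-! The twisted product is biadditive, so the residue of a commutator is a sum of residues of
commutators of monomials `aT^i`, `bT^j`. These vanish unless `j = -i`, and then
`[aT^i, bT^{-i}] = (T^i - 1)(T^{-i}(a)·b)`. Finally `T^n - 1` takes values in the image of `T - 1`,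
by telescoping `T^n x - x = ∑ (T(T^k x) - T^k x)`. -/

/-- Twisted multiplication of (finitely supported) Laurent polynomials in the
shift operator `T`: `(aT^i)·(bT^j) = a·T^i(b)·T^{i+j}`, extended bilinearly.
A series `∑ a_j T^j` is represented by its coefficient function `ℤ →₀ R`. -/
noncomputable def tmul {R : Type*} [CommRing R] (T : R ≃+* R) (A B : ℤ →₀ R) : ℤ →₀ R :=
  A.sum fun i a => B.sum fun j b => Finsupp.single (i + j) (a * (T ^ i) b)

section ShiftImage

variable {R : Type*} [NonAssocRing R] (T : R ≃+* R)

def shiftSubOne : R →+ R :=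
  T.toAddMonoidHom - AddMonoidHom.id R

lemma apply_sub_self_mem_range_shiftSubOne (x : R) : T x - x ∈ (shiftSubOne T).range :=
  ⟨x, rfl⟩

lemma zpow_apply_sub_self_mem_range_shiftSubOne (n : ℤ) (x : R) :
    (T ^ n) x - x ∈ (shiftSubOne T).range := by
  induction n using Int.induction_on with
  | zero => simp
  | succ n ih =>
    have step : (T ^ ((n : ℤ) + 1)) x - x = (T ((T ^ (n : ℤ)) x) - (T ^ (n : ℤ)) x)
        + ((T ^ (n : ℤ)) x - x) := by
      rw [add_comm, zpow_one_add, RingAut.mul_apply]; abel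
    rw [step]
    exact add_mem (apply_sub_self_mem_range_shiftSubOne T _) ih
  | pred n ih =>
    set y := (T ^ (-(n : ℤ) - 1)) x
    have hTy : T y = (T ^ (-(n : ℤ))) x := by
      rw [← RingAut.mul_apply, ← zpow_one_add, add_sub_cancel]
    have step : y - x = -(T y - y) + ((T ^ (-(n : ℤ))) x - x) := by
      rw [hTy]; abel
    rw [step]
    exact add_mem (neg_mem (apply_sub_self_mem_range_shiftSubOne T _)) ih

end ShiftImage

section TwistedProduct

variable {R : Type*} [CommRing R] (T : R ≃+* R)

@[simp]
lemma tmul_single_single (i j : ℤ) (a b : R) :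
    tmul T (Finsupp.single i a) (Finsupp.single j b) = Finsupp.single (i + j) (a * (T ^ i) b) := by
  simp [tmul]

lemma tmul_add_left (A₁ A₂ B : ℤ →₀ R) : tmul T (A₁ + A₂) B = tmul T A₁ B + tmul T A₂ B := by
  unfold tmul
  refine Finsupp.sum_add_index' (by simp) fun i a a' => ?_
  simp only [add_mul, Finsupp.single_add, Finsupp.sum_add]

lemma tmul_add_right (A B₁ B₂ : ℤ →₀ R) : tmul T A (B₁ + B₂) = tmul T A B₁ + tmul T A B₂ := by
  unfold tmul
  rw [← Finsupp.sum_add]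
  refine Finsupp.sum_congr fun i _ => Finsupp.sum_add_index' (by simp) fun j b b' => ?_
  simp only [map_add, mul_add, Finsupp.single_add]

@[simp] lemma tmul_zero_left (B : ℤ →₀ R) : tmul T 0 B = 0 := by simp [tmul]

@[simp] lemma tmul_zero_right (A : ℤ →₀ R) : tmul T A 0 = 0 := by simp [tmul]

lemma tmul_single_sub_tmul_single_neg (j : ℤ) (a b : R) :
    tmul T (Finsupp.single j a) (Finsupp.single (-j) b)
        - tmul T (Finsupp.single (-j) b) (Finsupp.single j a)
      = Finsupp.single 0 ((T ^ j) ((T ^ (-j)) a * b) - (T ^ (-j)) a * b) := by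
  rw [tmul_single_single, tmul_single_single, add_neg_cancel, neg_add_cancel,
    ← Finsupp.single_sub, map_mul, ← RingAut.mul_apply, ← zpow_add, add_neg_cancel, zpow_zero,
    RingAut.one_apply, mul_comm b]

lemma tmul_single_sub_tmul_single_apply_zero_mem (i j : ℤ) (a b : R) :
    (tmul T (Finsupp.single i a) (Finsupp.single j b)
        - tmul T (Finsupp.single j b) (Finsupp.single i a)) 0 ∈ (shiftSubOne T).range := by
  obtain rfl | hij := eq_or_ne j (-i)
  · rw [tmul_single_sub_tmul_single_neg, Finsupp.single_eq_same]
    exact zpow_apply_sub_self_mem_range_shiftSubOne T i _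
  · simp [show i + j ≠ 0 by omega, show j + i ≠ 0 by omega]

lemma tmul_sub_tmul_apply_zero_mem (A B : ℤ →₀ R) :
    (tmul T A B - tmul T B A) 0 ∈ (shiftSubOne T).range := by
  induction A using Finsupp.induction_linear with
  | zero => simp
  | add A₁ A₂ h₁ h₂ =>
    rw [tmul_add_left, tmul_add_right, add_sub_add_comm, Finsupp.add_apply]
    exact add_mem h₁ h₂
  | single i a =>
    induction B using Finsupp.induction_linear with
    | zero => simp
    | add B₁ B₂ h₁ h₂ =>
      rw [tmul_add_left, tmul_add_right, add_sub_add_comm, Finsupp.add_apply]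
      exact add_mem h₁ h₂
    | single j b => exact tmul_single_sub_tmul_single_apply_zero_mem T i j a b

end TwistedProduct

/-- the residue (coefficient of `T^0`) of any commutator `[A,B]`
lies in the image of `T - 1`; concretely, for monomials,
`[aT^j, bT^{-j}] = (T^j - 1)(T^{-j}(a)·b)`. -/
theorem residue_of_commutator_in_image_of_shift_minus_one
    {R : Type*} [CommRing R] (T : R ≃+* R) :
    (∀ (j : ℤ) (a b : R),
      tmul T (Finsupp.single j a) (Finsupp.single (-j) b)
        - tmul T (Finsupp.single (-j) b) (Finsupp.single j a)
        = Finsupp.single 0 ((T ^ j) ((T ^ (-j)) a * b) - (T ^ (-j)) a * b)) ∧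
    (∀ A B : ℤ →₀ R, ∃ c : R,
      (tmul T A B - tmul T B A) 0 = T c - c) := by
  refine ⟨tmul_single_sub_tmul_single_neg T, fun A B => ?_⟩
  obtain ⟨c, hc⟩ := tmul_sub_tmul_apply_zero_mem T A B
  exact ⟨c, hc.symm⟩
end

section
/- The residue of a product satisfies: Res(AB) − Res(BA) = (T−1)(c) for some explicit c, where for A = ∑ a_i T^i and B = ∑ b_j T^j one has Res(AB) = ∑_i a_i T^i(b_{-i}) and Res(BA) = ∑_i b_{-i} T^{-i}(a_i), and each difference a_i T^i(b_{-i}) − b_{-i} T^{-i}(a_i) equals (T^i − 1)(T^{-i}(a_i)·b_{-i}). -/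
section

variable {R : Type*} [CommRing R] (T : R ≃+* R)

lemma tmul_apply_left (A B : ℤ →₀ R) (n : ℤ) :
    tmul T A B n = ∑ i ∈ A.support, A i * (T ^ i) (B (n - i)) := by
  simp only [tmul, Finsupp.sum, Finset.sum_apply', Finsupp.single_apply]
  refine Finset.sum_congr rfl fun i _ => ?_
  rw [Finset.sum_eq_single (n - i)]
  · simp
  · exact fun j _ hj => if_neg (by omega)
  · intro h
    simp [Finsupp.notMem_support_iff.mp h]

lemma tmul_apply_right (A B : ℤ →₀ R) (n : ℤ) :
    tmul T A B n = ∑ j ∈ B.support, A (n - j) * (T ^ (n - j)) (B j) := by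
  simp only [tmul, Finsupp.sum, Finset.sum_apply', Finsupp.single_apply]
  rw [Finset.sum_comm]
  refine Finset.sum_congr rfl fun j _ => ?_
  rw [Finset.sum_eq_single (n - j)]
  · simp
  · exact fun i _ hi => if_neg (by omega)
  · intro h
    simp [Finsupp.notMem_support_iff.mp h]

lemma mul_zpow_sub_mul_zpow_neg (i : ℤ) (a b : R) :
    a * (T ^ i) b - b * (T ^ (-i)) a = (T ^ i) ((T ^ (-i)) a * b) - (T ^ (-i)) a * b := by
  have hinv : (T ^ i) ((T ^ (-i)) a) = a := by
    rw [← RingAut.mul_apply, ← zpow_add, add_neg_cancel, zpow_zero, RingAut.one_apply]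
  rw [map_mul, hinv]
  ring

end

section

variable {R : Type*} [NonAssocRing R] (T : R ≃+* R)

def rangeSubOne : AddSubgroup R :=
  (T.toAddMonoidHom - AddMonoidHom.id R).range

lemma mem_rangeSubOne {x : R} : x ∈ rangeSubOne T ↔ ∃ c, T c - c = x :=
  Iff.rfl

lemma apply_sub_self_mem_rangeSubOne (x : R) : T x - x ∈ rangeSubOne T :=
  (mem_rangeSubOne T).mpr ⟨x, rfl⟩

lemma zpow_apply_sub_self_mem_rangeSubOne (i : ℤ) (x : R) :
    (T ^ i) x - x ∈ rangeSubOne T := by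
  induction i using Int.induction_on generalizing x with
  | zero => simp
  | succ n ih =>
    have hsplit : (T ^ ((n : ℤ) + 1)) x - x
        = (T ((T ^ (n : ℤ)) x) - (T ^ (n : ℤ)) x) + ((T ^ (n : ℤ)) x - x) := by
      rw [add_comm, zpow_add, zpow_one, RingAut.mul_apply]
      abel
    rw [hsplit]
    exact add_mem (apply_sub_self_mem_rangeSubOne T _) (ih x)
  | pred n ih =>
    set y := (T ^ (-1 : ℤ)) x
    have hTy : T y = x := by
      rw [← zpow_one T, ← RingAut.mul_apply, ← zpow_add]
      simp
    have hsplit : (T ^ (-(n : ℤ) - 1)) x - x = ((T ^ (-(n : ℤ))) y - y) - (T y - y) := by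
      rw [sub_eq_add_neg (-(n : ℤ)), zpow_add, RingAut.mul_apply, hTy]
      abel
    rw [hsplit]
    exact sub_mem (ih y) (apply_sub_self_mem_rangeSubOne T y)

end

/-- `Res(AB) = ∑_i a_i T^i(b_{-i})`, `Res(BA) = ∑_i b_{-i} T^{-i}(a_i)`,
each difference `a_i T^i(b_{-i}) - b_{-i} T^{-i}(a_i)` equals
`(T^i - 1)(T^{-i}(a_i)·b_{-i})`, and `Res(AB) - Res(BA)` is in the image of `T - 1`. -/
theorem residue_of_product_difference
    {R : Type*} [CommRing R] (T : R ≃+* R) (A B : ℤ →₀ R) :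
    ((tmul T A B) 0 = ∑ i ∈ A.support, A i * (T ^ i) (B (-i))) ∧
    ((tmul T B A) 0 = ∑ i ∈ A.support, B (-i) * (T ^ (-i)) (A i)) ∧
    (∀ (i : ℤ) (a b : R),
      a * (T ^ i) b - b * (T ^ (-i)) a
        = (T ^ i) ((T ^ (-i)) a * b) - (T ^ (-i)) a * b) ∧
    (∃ c : R, (tmul T A B) 0 - (tmul T B A) 0 = T c - c) := by
  have hAB : (tmul T A B) 0 = ∑ i ∈ A.support, A i * (T ^ i) (B (-i)) := by
    simp only [tmul_apply_left, zero_sub]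
  have hBA : (tmul T B A) 0 = ∑ i ∈ A.support, B (-i) * (T ^ (-i)) (A i) := by
    simp only [tmul_apply_right, zero_sub]
  refine ⟨hAB, hBA, mul_zpow_sub_mul_zpow_neg T, ?_⟩
  have hmem : (tmul T A B) 0 - (tmul T B A) 0 ∈ rangeSubOne T := by
    rw [hAB, hBA, ← Finset.sum_sub_distrib]
    refine AddSubgroup.sum_mem _ fun i _ => ?_
    rw [mul_zpow_sub_mul_zpow_neg]
    exact zpow_apply_sub_self_mem_rangeSubOne T i _
  obtain ⟨c, hc⟩ := (mem_rangeSubOne T).mp hmem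
  exact ⟨c, hc.symm⟩
end

section
/- In the twisted Laurent series ring over R with automorphism T, if F = f_m T^m + (lower order terms) with m ≥ 1 and f_m invertible (or, in the field setting, f_m ≠ 0), and D is a derivation commuting with T, then the leading coefficient h of any series H = h T^m + (lower order terms) satisfying D(H) = [F,H] up to order T^{2m} must satisfy f_m · T^m(h) = T^m(f_m) · h. -/
lemma le_of_ne_zero_of_vanishing_above {R : Type*} [Zero R] {A : ℤ →₀ R} {a : ℤ}
    (hA : ∀ i, a < i → A i = 0) {i : ℤ} (hi : A i ≠ 0) : i ≤ a :=
  not_lt.1 fun h => hi (hA i h)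

lemma tmul_apply_add_of_vanishing_above {R : Type*} [CommRing R] (T : R ≃+* R)
    {A B : ℤ →₀ R} {a b : ℤ} (hA : ∀ i, a < i → A i = 0) (hB : ∀ j, b < j → B j = 0) :
    tmul T A B (a + b) = A a * (T ^ a) (B b) := by
  unfold tmul
  rw [Finsupp.sum_apply, Finsupp.sum_eq_single a, Finsupp.sum_apply, Finsupp.sum_eq_single b]
  · exact Finsupp.single_eq_same
  · intro j hj hjb
    have := le_of_ne_zero_of_vanishing_above hB hj
    exact Finsupp.single_eq_of_ne (by omega)
  · simp
  · intro i hi hia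
    rw [Finsupp.sum_apply]
    refine Finset.sum_eq_zero fun j hj => Finsupp.single_eq_of_ne ?_
    have := le_of_ne_zero_of_vanishing_above hA hi
    have := le_of_ne_zero_of_vanishing_above hB (Finsupp.mem_support_iff.1 hj)
    omega
  · simp

theorem leading_coefficient_equation_general
    {R : Type*} [CommRing R] (T : R ≃+* R) (D : R →+ R)
    (m : ℤ) (hm : 1 ≤ m)
    (F H : ℤ →₀ R)
    (hFdeg : ∀ j : ℤ, m < j → F j = 0)
    (hHdeg : ∀ j : ℤ, m < j → H j = 0)
    (hlax : D (H (2 * m)) = (tmul T F H - tmul T H F) (2 * m)) :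
    F m * (T ^ m) (H m) = (T ^ m) (F m) * H m := by
  have hH2m : H (2 * m) = 0 := hHdeg _ (by omega)
  rw [hH2m, map_zero, Finsupp.sub_apply, two_mul, tmul_apply_add_of_vanishing_above T hFdeg hHdeg,
    tmul_apply_add_of_vanishing_above T hHdeg hFdeg] at hlax
  linear_combination -hlax

/-- if `F = f_m T^m + (lower)` with `m ≥ 1` and `f_m` invertible,
`D` is a derivation commuting with `T`, and `H = h T^m + (lower)` satisfies
`D(H) = [F,H]` up to order `T^{2m}` (i.e. the `T^{2m}` coefficients agree),
then the leading coefficient satisfies `f_m · T^m(h) = T^m(f_m) · h`. -/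
theorem leading_coefficient_equation
    {R : Type*} [CommRing R] (T : R ≃+* R) (D : R →+ R)
    (hLeib : ∀ x y : R, D (x * y) = D x * y + x * D y)
    (hDT : ∀ x : R, D (T x) = T (D x))
    (m : ℤ) (hm : 1 ≤ m)
    (F H : ℤ →₀ R)
    (hFdeg : ∀ j : ℤ, m < j → F j = 0)
    (hHdeg : ∀ j : ℤ, m < j → H j = 0)
    (hfm : IsUnit (F m))
    (hlax : D (H (2 * m)) = (tmul T F H - tmul T H F) (2 * m)) :
    F m * (T ^ m) (H m) = (T ^ m) (F m) * H m :=
  leading_coefficient_equation_general T D m hm F H hFdeg hHdeg hlax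
end

section
/- (Lemma on nonautonomous solvability) Let F(n) = f_m(n)T^m + … be a Laurent series in T^{-1} with coefficients that are sequences (elements of the ring of sequences of functions), with m ≥ 1 and f_m(n) ≠ 0 for all n. Then for any degree k and any prescribed initial data G(0), G(1), …, G(m−1), there exists a unique series G(n) = g_k(n)T^k + … with sequence coefficients satisfying D_t(G) = [F,G] and the given initial conditions. The key step: the coefficient equation in order T^{j+m} has the form f_m(n)·g_j(n+m) − f_m(n+j)·g_j(n) = (known terms), which determines g_j(n) for all n ∈ ℤ uniquely from the values g_j(0),…,g_j(m−1). -/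
/-!
Write `G = ∑_{j ≤ k} g_j T^j`. In the `T^{j+m}`-coefficient of `D_t G = [F, G]` the coefficient
`g_j` occurs only through `f_m(n) g_j(n+m) - f_m(n+j) g_j(n)`; every other term involves some
`g_i` with `i > j`. So, going down from `j = k`, each `g_j` solves an inhomogeneous recurrence of
step `m` whose coefficients `f_m(n)`, `f_m(n+j)` never vanish. Along each residue class mod `m`
such a recurrence is an invertible affine step, hence has exactly one two-sided solution through
the prescribed value in `[0, m)`.
-/

namespace NonautonomousLax

section Orbit

variable {α : Type*} (e : ℤ → Equiv.Perm α) (x : α)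

/-- `orbitNeg e x n` is the value of `orbit e x` at `-(n + 1)`. -/
def orbitNeg : ℕ → α
  | 0 => (e (Int.negSucc 0)).symm x
  | n + 1 => (e (Int.negSucc (n + 1))).symm (orbitNeg n)

def orbitNonneg : ℕ → α
  | 0 => x
  | n + 1 => e n (orbitNonneg n)

def orbit : ℤ → α
  | Int.ofNat n => orbitNonneg e x n
  | Int.negSucc n => orbitNeg e x n

@[simp]
theorem orbit_zero : orbit e x 0 = x := rfl

theorem orbit_succ (q : ℤ) : orbit e x (q + 1) = e q (orbit e x q) := by
  rcases q with n | _ | n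
  · rfl
  · exact ((e _).apply_symm_apply x).symm
  · exact ((e _).apply_symm_apply _).symm

variable {e x}

theorem eq_orbit {p : ℤ → α} (h0 : p 0 = x) (hstep : ∀ q, p (q + 1) = e q (p q)) :
    p = orbit e x := by
  funext q
  induction q using Int.induction_on with
  | zero => exact h0
  | succ q ih => rw [hstep, orbit_succ, ih]
  | pred q ih =>
    apply (e (-q - 1)).injective
    rw [← hstep, ← orbit_succ, sub_add_cancel, ih]

end Orbit

theorem existsUnique_permRecurrence {α : Type*} (e : ℤ → Equiv.Perm α) {m : ℤ} (hm : 0 < m)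
    (w : ℤ → α) :
    ∃! g : ℤ → α, (∀ n, 0 ≤ n → n < m → g n = w n) ∧ ∀ n, g (n + m) = e n (g n) := by
  refine ⟨fun n => orbit (fun q => e (n % m + q * m)) (w (n % m)) (n / m), ⟨?_, ?_⟩, ?_⟩
  · intro n h0 h1
    simp only [Int.emod_eq_of_lt h0 h1, Int.ediv_eq_zero_of_lt h0 h1, orbit_zero]
  · intro n
    simp only [Int.add_emod_right, Int.add_ediv_of_dvd_right (dvd_refl m), Int.ediv_self hm.ne',
      orbit_succ, Int.emod_add_ediv_mul]
  · rintro g ⟨hinit, hstep⟩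
    funext n
    have hclass : (fun q => g (n % m + q * m)) = orbit (fun q => e (n % m + q * m)) (w (n % m)) :=
      eq_orbit (by simpa using hinit _ (Int.emod_nonneg n hm.ne') (Int.emod_lt_of_pos n hm))
        fun q => by rw [← hstep, add_one_mul, add_assoc]
    simpa only [Int.emod_add_ediv_mul] using congrFun hclass (n / m)

section LinearRecurrence

variable {K : Type*} [Field K]

def affinePerm (a b c : K) (ha : a ≠ 0) (hb : b ≠ 0) : Equiv.Perm K where
  toFun y := (b * y + c) / a
  invFun z := (a * z - c) / b
  left_inv y := by field_simp; ring
  right_inv z := by field_simp; ring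

theorem existsUnique_linearRecurrence (a b c : ℤ → K) (ha : ∀ n, a n ≠ 0) (hb : ∀ n, b n ≠ 0)
    {m : ℤ} (hm : 0 < m) (w : ℤ → K) :
    ∃! g : ℤ → K, (∀ n, 0 ≤ n → n < m → g n = w n) ∧
      ∀ n, a n * g (n + m) = b n * g n + c n := by
  refine (existsUnique_congr fun g => and_congr_right fun _ => forall_congr' fun n => ?_).mp
    (existsUnique_permRecurrence (fun n => affinePerm (a n) (b n) (c n) (ha n) (hb n)) hm w)
  rw [mul_comm, ← eq_div_iff (ha n)]
  rfl

end LinearRecurrence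

section DownwardRecursion

variable {β : Type*} [Zero β]

def DependsOnlyAbove (s : ℤ → (ℤ → β) → β) : Prop :=
  ∀ j H H', (∀ i, j < i → H i = H' i) → s j H = s j H'

def truncatedStep (k : ℤ) (s : ℤ → (ℤ → β) → β) (H : ℤ → β) : ℤ → β :=
  fun j => if k < j then 0 else s j H

variable {k : ℤ} {s : ℤ → (ℤ → β) → β}

theorem truncatedStep_of_lt (H : ℤ → β) {j : ℤ} (hj : k < j) : truncatedStep k s H j = 0 :=
  if_pos hj

theorem truncatedStep_of_le (H : ℤ → β) {j : ℤ} (hj : j ≤ k) : truncatedStep k s H j = s j H :=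
  if_neg (not_lt.2 hj)

theorem iterate_truncatedStep_of_lt (n : ℕ) {j : ℤ} (hj : k < j) :
    (truncatedStep k s)^[n] 0 j = 0 := by
  cases n with
  | zero => rfl
  | succ n => rw [Function.iterate_succ_apply', truncatedStep_of_lt _ hj]

theorem truncatedStep_eq_self_iff {G : ℤ → β} :
    truncatedStep k s G = G ↔ (∀ j, k < j → G j = 0) ∧ ∀ j ≤ k, G j = s j G := by
  refine ⟨fun h => ⟨fun j hj => ?_, fun j hj => ?_⟩, fun ⟨hzero, hstep⟩ => funext fun j => ?_⟩
  · exact (congrFun h j).symm.trans (truncatedStep_of_lt G hj)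
  · exact (congrFun h j).symm.trans (truncatedStep_of_le G hj)
  · rcases lt_or_ge k j with hj | hj
    · rw [truncatedStep_of_lt G hj, hzero j hj]
    · rw [truncatedStep_of_le G hj, hstep j hj]

/-- Each application of `truncatedStep` fixes one more coefficient, going down from `k`. -/
theorem iterate_truncatedStep_congr (hs : DependsOnlyAbove s) {H H' : ℤ → β}
    (h : ∀ j, k < j → H j = H' j) (n : ℕ) :
    ∀ j, k - n < j → (truncatedStep k s)^[n] H j = (truncatedStep k s)^[n] H' j := by
  induction n with
  | zero => simpa using h
  | succ n ih =>
    intro j hj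
    simp only [Function.iterate_succ_apply']
    rcases lt_or_ge k j with hkj | hjk
    · rw [truncatedStep_of_lt _ hkj, truncatedStep_of_lt _ hkj]
    · rw [truncatedStep_of_le _ hjk, truncatedStep_of_le _ hjk]
      exact hs j _ _ fun i hi => ih i (by omega)

theorem iterate_truncatedStep_add (hs : DependsOnlyAbove s) (a b : ℕ) {j : ℤ} (hj : k - a < j) :
    (truncatedStep k s)^[a + b] 0 j = (truncatedStep k s)^[a] 0 j := by
  rw [Function.iterate_add_apply]
  exact iterate_truncatedStep_congr hs (fun i hi => iterate_truncatedStep_of_lt b hi) a j hj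

theorem existsUnique_of_dependsOnlyAbove (hs : DependsOnlyAbove s) :
    ∃! G : ℤ → β, (∀ j, k < j → G j = 0) ∧ ∀ j ≤ k, G j = s j G := by
  simp only [← truncatedStep_eq_self_iff]
  refine ⟨fun j => (truncatedStep k s)^[(k - j).toNat + 1] 0 j, funext fun j => ?_,
    fun G hG => funext fun j => ?_⟩
  · rcases lt_or_ge k j with hkj | hjk
    · rw [truncatedStep_of_lt _ hkj, iterate_truncatedStep_of_lt _ hkj]
    · rw [Function.iterate_succ_apply', truncatedStep_of_le _ hjk, truncatedStep_of_le _ hjk]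
      refine hs j _ _ fun i hi => ?_
      rw [← iterate_truncatedStep_add hs _ (k - j).toNat (by omega), add_comm,
        iterate_truncatedStep_add hs _ _ (by omega)]
  · rw [← Function.iterate_fixed hG ((k - j).toNat + 1)]
    exact iterate_truncatedStep_congr hs (truncatedStep_eq_self_iff.1 hG).1 _ j (by omega)

end DownwardRecursion

section LaxCoefficients

variable {R : Type*} [CommRing R]

/-- The `T^l`-coefficient of `[F, G]`, for `F` of degree `m` and `G` of degree `k`. -/
noncomputable def commutatorCoeff (F G : ℤ → ℤ → R) (m k l n : ℤ) : R :=
  (∑ i ∈ Finset.Icc (l - k) m, F i n * G (l - i) (n + i)) -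
    ∑ i ∈ Finset.Icc (l - m) k, G i n * F (l - i) (n + i)

/-- The terms of the `T^{j+m}`-coefficient equation not involving `G j`. -/
noncomputable def knownTerms (D : R → R) (F G : ℤ → ℤ → R) (m k j n : ℤ) : R :=
  D (G (j + m) n) - (∑ i ∈ Finset.Icc (j + m - k) (m - 1), F i n * G (j + m - i) (n + i)) +
    ∑ i ∈ Finset.Icc (j + 1) k, G i n * F (j + m - i) (n + i)

theorem knownTerms_congr (D : R → R) (F : ℤ → ℤ → R) {G G' : ℤ → ℤ → R} {m : ℤ} (hm : 1 ≤ m)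
    (k : ℤ) {j : ℤ} (h : ∀ i, j < i → G i = G' i) :
    knownTerms D F G m k j = knownTerms D F G' m k j := by
  funext n
  unfold knownTerms
  rw [h (j + m) (by omega)]
  refine congrArg₂ (· + ·) (congrArg₂ (· - ·) rfl ?_) ?_
  · refine Finset.sum_congr rfl fun i hi => ?_
    rw [h (j + m - i) (by simp only [Finset.mem_Icc] at hi; omega)]
  · refine Finset.sum_congr rfl fun i hi => ?_
    rw [h i (by simp only [Finset.mem_Icc] at hi; omega)]

theorem coeffEq_iff_recurrence (D : R → R) (F G : ℤ → ℤ → R) {m k j : ℤ} (hj : j ≤ k) (n : ℤ) :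
    D (G (j + m) n) = commutatorCoeff F G m k (j + m) n ↔
      F m n * G j (n + m) = F m (n + j) * G j n + knownTerms D F G m k j n := by
  have hF : Finset.Icc (j + m - k) m = insert m (Finset.Icc (j + m - k) (m - 1)) := by
    ext i; simp only [Finset.mem_Icc, Finset.mem_insert]; omega
  have hG : Finset.Icc (j + m - m) k = insert j (Finset.Icc (j + 1) k) := by
    ext i; simp only [Finset.mem_Icc, Finset.mem_insert]; omega
  rw [commutatorCoeff, hF, hG, Finset.sum_insert (by simp), Finset.sum_insert (by simp),
    add_sub_cancel_right, add_sub_cancel_left, knownTerms]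
  constructor <;> intro h <;> linear_combination -h

theorem commutatorCoeff_eq_zero_of_lt (F G : ℤ → ℤ → R) {m k l : ℤ} (hl : k + m < l) (n : ℤ) :
    commutatorCoeff F G m k l n = 0 := by
  rw [commutatorCoeff, Finset.Icc_eq_empty (by omega), Finset.Icc_eq_empty (by omega),
    Finset.sum_empty, Finset.sum_empty, sub_zero]

theorem laxEq_iff_recurrences (D : R →+ R) (F : ℤ → ℤ → R) {G : ℤ → ℤ → R} {m k : ℤ}
    (hm : 0 ≤ m) (hG : ∀ j, k < j → G j = 0) :
    (∀ l n, D (G l n) = commutatorCoeff F G m k l n) ↔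
      ∀ j ≤ k, ∀ n, F m n * G j (n + m) = F m (n + j) * G j n + knownTerms D F G m k j n := by
  refine ⟨fun h j hj n => (coeffEq_iff_recurrence D F G hj n).1 (h _ n), fun h l n => ?_⟩
  by_cases hl : l ≤ k + m
  · simpa using (coeffEq_iff_recurrence D F G (j := l - m) (by omega) n).2 (h _ (by omega) n)
  · rw [commutatorCoeff_eq_zero_of_lt F G (by omega), hG l (by omega), Pi.zero_apply, map_zero]

end LaxCoefficients

end NonautonomousLax

open NonautonomousLax in
/-- A series `∑_{j ≤ k} g_j(n) T^j` is represented by `G : ℤ → ℤ → K` (coefficient index `j`,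
sequence index `n`) with `G j = 0` for `j > k`; the last conjunct is the `T^l`-coefficient of
`D_t(G) = [F,G]`, using `T^i(g)(n) = g(n+i)`. -/
theorem nonautonomous_Lax_solvability_general
    {K : Type*} [Field K] (Dt : K →+ K)
    (m : ℤ) (hm : 1 ≤ m) (k : ℤ)
    (F : ℤ → ℤ → K)
    (hfm : ∀ n : ℤ, F m n ≠ 0)
    (v : ℤ → ℤ → K) :
    ∃! G : ℤ → ℤ → K,
      (∀ j : ℤ, k < j → G j = 0) ∧
      (∀ j : ℤ, j ≤ k → ∀ n : ℤ, 0 ≤ n → n < m → G j n = v j n) ∧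
      (∀ l n : ℤ,
        Dt (G l n) =
          (∑ i ∈ Finset.Icc (l - k) m, F i n * G (l - i) (n + i)) -
          (∑ i ∈ Finset.Icc (l - m) k, G i n * F (l - i) (n + i))) := by
  have hsolve (j : ℤ) (c : ℤ → K) := existsUnique_linearRecurrence (F m) (fun n => F m (n + j)) c
    hfm (fun n => hfm (n + j)) (by omega : 0 < m) (v j)
  let s (j : ℤ) (H : ℤ → ℤ → K) : ℤ → K := (hsolve j (knownTerms Dt F H m k j)).exists.choose
  have hs : DependsOnlyAbove s := fun j H H' h => by simp only [s, knownTerms_congr Dt F hm k h]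
  have hs_iff (j : ℤ) (G : ℤ → ℤ → K) : G j = s j G ↔ (∀ n, 0 ≤ n → n < m → G j n = v j n) ∧
      ∀ n, F m n * G j (n + m) = F m (n + j) * G j n + knownTerms Dt F G m k j n :=
    ⟨fun h => h ▸ (hsolve j _).exists.choose_spec,
      fun h => (hsolve j _).unique h (hsolve j _).exists.choose_spec⟩
  refine (existsUnique_congr fun G => and_congr_right fun hG => ?_).1
    (existsUnique_of_dependsOnlyAbove hs)
  rw [forall₂_congr fun j _ => hs_iff j G, forall₂_and]
  exact and_congr_right' (laxEq_iff_recurrences Dt F (by omega) hG).symm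

/-- Lemma on nonautonomous solvability: Laurent series in `T^{-1}`
with coefficients which are sequences `ℤ → K`; a series `∑_{j ≤ k} g_j(n) T^j`
is represented by `G : ℤ → ℤ → K` (coefficient index `j`, sequence index `n`)
with `G j = 0` for `j > k`.  The shift acts by `T^i(g)(n) = g(n+i)`, so the
`T^l`-coefficient of the Lax equation `D_t(G) = [F,G]` reads
`D_t(G l n) = ∑_i F i n · G (l-i) (n+i) − ∑_i G i n · F (l-i) (n+i)`
(all sums finite since both series have degrees bounded above by `m`, `k`).
Given `F = f_m T^m + …` with `m ≥ 1`, `f_m(n) ≠ 0` for all `n`, any degree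
`k` and prescribed initial data (the values of every coefficient sequence at
`n = 0, …, m-1`), there is a unique solution. -/
theorem nonautonomous_Lax_solvability
    {K : Type*} [Field K] (Dt : K →+ K)
    (hLeib : ∀ a b : K, Dt (a * b) = Dt a * b + a * Dt b)
    (m : ℤ) (hm : 1 ≤ m) (k : ℤ)
    (F : ℤ → ℤ → K)
    (hFdeg : ∀ j : ℤ, m < j → F j = 0)
    (hfm : ∀ n : ℤ, F m n ≠ 0)
    (v : ℤ → ℤ → K) :
    ∃! G : ℤ → ℤ → K,
      (∀ j : ℤ, k < j → G j = 0) ∧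
      (∀ j : ℤ, j ≤ k → ∀ n : ℤ, 0 ≤ n → n < m → G j n = v j n) ∧
      (∀ l n : ℤ,
        Dt (G l n) =
          (∑ i ∈ Finset.Icc (l - k) m, F i n * G (l - i) (n + i)) -
          (∑ i ∈ Finset.Icc (l - m) k, G i n * F (l - i) (n + i))) :=
  nonautonomous_Lax_solvability_general Dt m hm k F hfm v
end

section
/- If R is an invertible series satisfying the formal conservation law equation D_t(R) + F†R + RF = 0 and G satisfies the Lax equation D_t(G) = [F,G], then the series Ḡ := −(R G R^{-1})† satisfies the Lax equation D_t(Ḡ) = [F, Ḡ]. -/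
/-!
Conjugating a solution `G` of the Lax equation for `F` by a solution `R` of `D R = B R - R F`
gives a solution `R G R⁻¹` of the Lax equation for `B`. The conservation law says exactly this
with `B = -F†`, and applying `X ↦ -X†` turns a solution for `-F†` back into one for `F`.
-/

section

variable {L : Type*} [Ring L]

def LaxEq (D : L →+ L) (F G : L) : Prop :=
  D G = F * G - G * F

section Leibniz

variable {D : L →+ L} (hD : ∀ x y : L, D (x * y) = D x * y + x * D y)
include hD

theorem leibniz_map_one : D 1 = 0 := by
  simpa using hD 1 1

theorem leibniz_map_inv {R Rinv : L} (hR : R * Rinv = 1) (hR' : Rinv * R = 1) :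
    D Rinv = -(Rinv * D R * Rinv) := by
  have h : D Rinv * R + Rinv * D R = 0 := by rw [← hD, hR', leibniz_map_one hD]
  calc D Rinv = (D Rinv * R + Rinv * D R) * Rinv - Rinv * D R * Rinv := by
        rw [add_mul, mul_assoc (D Rinv), hR, mul_one]; abel
    _ = -(Rinv * D R * Rinv) := by rw [h, zero_mul, zero_sub]

theorem LaxEq.conj {B F G R Rinv : L} (hR : R * Rinv = 1) (hR' : Rinv * R = 1)
    (hDR : D R = B * R - R * F) (hG : LaxEq D F G) : LaxEq D B (R * G * Rinv) := by
  have hDRinv : D Rinv = F * Rinv - Rinv * B := by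
    have h : Rinv * (B * R - R * F) * Rinv = Rinv * B * (R * Rinv) - Rinv * R * F * Rinv := by
      noncomm_ring
    rw [leibniz_map_inv hD hR hR', hDR, h, hR, hR']
    noncomm_ring
  unfold LaxEq at hG ⊢
  rw [hD, hD, hDR, hG, hDRinv]
  noncomm_ring

end Leibniz

theorem LaxEq.neg_dag {D dag : L →+ L} (hdagmul : ∀ x y : L, dag (x * y) = dag y * dag x)
    (hDdag : ∀ x : L, D (dag x) = dag (D x)) {B H : L} (hH : LaxEq D B H) :
    LaxEq D (-dag B) (-dag H) := by
  unfold LaxEq at hH ⊢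
  rw [map_neg, hDdag, hH, map_sub, hdagmul, hdagmul]
  noncomm_ring

end

/-- in the (twisted Laurent series) ring, if `R` is invertible
and satisfies the formal conservation law equation `D_t(R) + F†R + RF = 0`
and `G` satisfies the Lax equation `D_t(G) = [F,G]`, then
`Ḡ := −(R G R⁻¹)†` also satisfies the Lax equation `D_t(Ḡ) = [F,Ḡ]`.
Here `D` is a derivation and `†` is an involutive antihomomorphism
commuting with `D`. -/
theorem conjugated_solution_of_Lax
    {L : Type*} [Ring L] (D : L →+ L)
    (hLeib : ∀ x y : L, D (x * y) = D x * y + x * D y)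
    (dag : L →+ L)
    (hdagmul : ∀ x y : L, dag (x * y) = dag y * dag x)
    (hdaginv : ∀ x : L, dag (dag x) = x)
    (hDdag : ∀ x : L, D (dag x) = dag (D x))
    (F G R Rinv : L) (hR : R * Rinv = 1) (hR' : Rinv * R = 1)
    (hReq : D R + dag F * R + R * F = 0)
    (hG : D G = F * G - G * F) :
    D (-(dag (R * G * Rinv)))
      = F * (-(dag (R * G * Rinv))) - (-(dag (R * G * Rinv))) * F := by
  have hDR : D R = -dag F * R - R * F := by
    rw [← sub_eq_zero, ← hReq]; noncomm_ring
  have hconj : LaxEq D (-dag F) (R * G * Rinv) := LaxEq.conj hLeib hR hR' hDR hG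
  have h := hconj.neg_dag hdagmul hDdag
  rwa [map_neg, hdaginv, neg_neg] at h
end
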